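/- arXiv:2010.01000 — 2 statements merged into one kernel-verified Lean document; each statement's English description precedes it below -/
import Mathlib

section
/- Let $n \geq 2$ and $k$ with $n \leq k \leq 2n-2$ be integers. Let $P_1, P_2$ be nonzero real polynomials such that $P_1$ is irreducible over $\mathbb{Q}$ (as an integer polynomial, i.e., irreducible in $\mathbb{Q}[T]$), $\deg P_1 = n$, $\deg P_2 \leq n$, and $P_2$ is not a scalar multiple of $P_1$. Then the set $\{P_1, T P_1, \ldots, T^{k-n} P_1, P_2, T P_2, \ldots, T^{k-n} P_2\}$ of $2(k-n+1)$ polynomials is linearly independent over $\mathbb{Q}$, and every polynomial in it has degree at most $k$. -/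
open Polynomial

lemma coeff_lincomb (m : ℕ) (g : Fin m → ℚ) (j : Fin m) :
    (∑ i : Fin m, g i • (X : ℚ[X]) ^ (i : ℕ)).coeff j = g j := by
  rw [Polynomial.finset_sum_coeff]
  rw [Finset.sum_eq_single j]
  · simp [coeff_smul, coeff_X_pow]
  · intro b _ hb
    simp only [coeff_smul, coeff_X_pow, smul_eq_mul]
    rw [if_neg (by simpa [Fin.val_injective.eq_iff, eq_comm] using hb), mul_zero]
  · simp

lemma deg_lincomb (m : ℕ) (g : Fin m → ℚ) :
    (∑ i : Fin m, g i • (X : ℚ[X]) ^ (i : ℕ)).natDegree ≤ m - 1 := by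
  refine Polynomial.natDegree_sum_le_of_forall_le _ _ ?_
  intro i _
  calc (g i • (X : ℚ[X]) ^ (i : ℕ)).natDegree ≤ ((X : ℚ[X]) ^ (i : ℕ)).natDegree :=
        Polynomial.natDegree_smul_le _ _
    _ ≤ m - 1 := by rw [natDegree_X_pow]; omega

/-- linear independence of the family
`P₁, T·P₁, …, T^{k-n}·P₁, P₂, T·P₂, …, T^{k-n}·P₂` for `P₁` irreducible of degree `n`. -/
theorem stmt_2 (n k : ℕ) (hn : 2 ≤ n) (hnk : n ≤ k) (hk : k ≤ 2 * n - 2)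
    (P₁ P₂ : Polynomial ℚ) (hP₁ : P₁ ≠ 0) (hP₂ : P₂ ≠ 0)
    (hirr : Irreducible P₁) (hdeg₁ : P₁.natDegree = n) (hdeg₂ : P₂.natDegree ≤ n)
    (hmul : ¬∃ c : ℚ, P₂ = c • P₁) :
    LinearIndependent ℚ
      (Sum.elim (fun i : Fin (k - n + 1) => Polynomial.X ^ (i : ℕ) * P₁)
                (fun i : Fin (k - n + 1) => Polynomial.X ^ (i : ℕ) * P₂)) ∧
    (∀ i : Fin (k - n + 1), (Polynomial.X ^ (i : ℕ) * P₁).natDegree ≤ k) ∧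
    (∀ i : Fin (k - n + 1), (Polynomial.X ^ (i : ℕ) * P₂).natDegree ≤ k) := by
  set m := k - n + 1 with hm
  have hdegbound : ∀ (P : ℚ[X]) (i : Fin m), P.natDegree ≤ n →
      ((X : ℚ[X]) ^ (i : ℕ) * P).natDegree ≤ k := by
    intro P i hP
    calc ((X : ℚ[X]) ^ (i : ℕ) * P).natDegree ≤ ((X:ℚ[X])^(i:ℕ)).natDegree + P.natDegree :=
          natDegree_mul_le
      _ ≤ (i : ℕ) + n := by rw [natDegree_X_pow]; omega
      _ ≤ k := by have := i.isLt; omega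
  refine ⟨?_, fun i => hdegbound P₁ i hdeg₁.le, fun i => hdegbound P₂ i hdeg₂⟩
  rw [Fintype.linearIndependent_iff]
  intro g hg
  set U : ℚ[X] := ∑ i : Fin m, g (Sum.inl i) • (X : ℚ[X]) ^ (i : ℕ) with hU
  set V : ℚ[X] := ∑ i : Fin m, g (Sum.inr i) • (X : ℚ[X]) ^ (i : ℕ) with hV
  have key : U * P₁ + V * P₂ = 0 := by
    rw [hU, hV, Finset.sum_mul, Finset.sum_mul]
    simp only [smul_mul_assoc]
    rw [← hg, Fintype.sum_sum_type]
    simp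
  have hVdeg : V.natDegree ≤ n - 2 := le_trans (deg_lincomb m _) (by omega)
  have hUdeg : U.natDegree ≤ n - 2 := le_trans (deg_lincomb m _) (by omega)
  have hprime : Prime P₁ := hirr.prime
  have hdvd : P₁ ∣ V * P₂ := ⟨-U, by linear_combination key⟩
  have hV0 : V = 0 := by
    rcases hprime.2.2 _ _ hdvd with h | h
    · by_contra hV0
      have := Polynomial.natDegree_le_of_dvd h hV0
      omega
    · exfalso
      obtain ⟨q, hq⟩ := h
      have hq0 : q ≠ 0 := by rintro rfl; simp at hq; exact hP₂ hq
      have : P₂.natDegree = n + q.natDegree := by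
        rw [hq, Polynomial.natDegree_mul hP₁ hq0, hdeg₁]
      have hqdeg : q.natDegree = 0 := by omega
      obtain ⟨c, hc⟩ := Polynomial.natDegree_eq_zero.mp hqdeg
      exact hmul ⟨c, by rw [hq, ← hc, mul_comm, ← Polynomial.smul_eq_C_mul]⟩
  have hU0 : U = 0 := by
    have : U * P₁ = 0 := by rw [hV0] at key; simpa using key
    rcases mul_eq_zero.mp this with h | h
    · exact h
    · exact absurd h hP₁
  intro i
  cases i with
  | inl i => have := coeff_lincomb m (fun i => g (Sum.inl i)) i
             rw [← hU, hU0] at this; simpa using this.symm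
  | inr i => have := coeff_lincomb m (fun i => g (Sum.inr i)) i
             rw [← hV, hV0] at this; simpa using this.symm
end

section
/- Let $k \geq n \geq 1$ be integers and $\underline{\xi} = (\xi_1, \xi_2, \ldots)$ an infinite sequence of reals such that $\{1, \xi_1, \ldots, \xi_k\}$ is linearly independent over $\mathbb{Q}$. If $\lambda_n(\underline{\xi}_n) > \frac{k-n+1}{n}$, then $\lambda_k(\underline{\xi}_k) \geq \frac{n\lambda_n(\underline{\xi}_n) + n - 1}{n(k-1)(\lambda_n(\underline{\xi}_n) + 1) + 1} > \frac{1}{k}$, where $\underline{\xi}_N = (\xi_1, \ldots, \xi_N)$. -/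
/-- `(x, y)` is a solution of the simultaneous approximation system
`1 ≤ |x| ≤ X`, `|ζ_j x - y_j| ≤ X^{-l}` for a general vector `ζ ∈ ℝ^N`. -/
def goodSimulVec (N : ℕ) (ζ : Fin N → ℝ) (l X : ℝ) : Prop :=
  ∃ x : ℤ, ∃ y : Fin N → ℤ, 1 ≤ |x| ∧ (|x| : ℝ) ≤ X ∧
    ∀ j : Fin N, |ζ j * (x : ℝ) - (y j : ℝ)| ≤ X ^ (-l)

/-- The ordinary exponent `λ_N(ζ)` of simultaneous rational approximation. -/
noncomputable def lambdaVec (N : ℕ) (ζ : Fin N → ℝ) : EReal :=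
  sSup {e : EReal | ∃ l : ℝ, e = (l : EReal) ∧ ∀ X₀ : ℝ, ∃ X ≥ X₀, goodSimulVec N ζ l X}

/-- The uniform exponent `λ̂_N(ζ)` of simultaneous rational approximation. -/
noncomputable def lambdaHatVec (N : ℕ) (ζ : Fin N → ℝ) : EReal :=
  sSup {e : EReal | ∃ l : ℝ, e = (l : EReal) ∧ ∃ X₁ : ℝ, ∀ X ≥ X₁, goodSimulVec N ζ l X}

/-!
A simultaneous approximation `x` to `ξ_n` with `|x| ≤ Y` and errors `≤ Y^{-l}` yields, by the
pigeonhole principle applied to `∑ d_j y_j mod x` over `0 ≤ d_j ≤ |x|^{1/n}`, a nonzero integer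
linear form `L = a + ∑ b_j ξ_j` of height `U ≤ |x|^{1/n}` with `|L| ≤ n U^{-(nl+n-1)}`; padding `b`
with zeros makes it a linear form in `ξ_k`. Khintchine's transference turns such a form back into
simultaneous approximations to `ξ_k`: pigeonholing the fractional parts of `z ξ_j` for `j ≠ m`,
where `|b_m|` is maximal, together with a residue modulo `b_m`, gives `1 ≤ x ≤ Q^{k-1} U` with
`‖x ξ_j‖ ≤ Q^{k-1}|L| + k/Q` for all `j`. With `Q ≈ |L|^{-1/k}` this gives
`λ_k ≥ w/((k-1)w + k)` for `w = nl + n - 1`, the claimed bound. Linear independence of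
`1, ξ_1, …, ξ_k` keeps `L ≠ 0` and forces the heights `U` to infinity.
-/

open Filter Finset

def linForm {N : ℕ} (ζ : Fin N → ℝ) (a : ℤ) (b : Fin N → ℤ) : ℝ :=
  a + ∑ j, b j * ζ j

section

variable {N : ℕ} {ζ : Fin N → ℝ}

theorem goodSimulVec_anti {l₁ l₂ X : ℝ} (hl : l₂ ≤ l₁) (hX : 1 ≤ X)
    (h : goodSimulVec N ζ l₁ X) : goodSimulVec N ζ l₂ X := by
  obtain ⟨x, y, hx, hxX, hy⟩ := h
  exact ⟨x, y, hx, hxX, fun j =>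
    (hy j).trans (Real.rpow_le_rpow_of_exponent_le hX (neg_le_neg hl))⟩

theorem frequently_goodSimulVec_of_lt_lambdaVec {l : ℝ} (hl : (l : EReal) < lambdaVec N ζ) :
    ∃ᶠ X in atTop, goodSimulVec N ζ l X := by
  obtain ⟨_, ⟨l', rfl, hl'⟩, hll'⟩ := lt_sSup_iff.1 hl
  refine frequently_atTop.2 fun X₀ => ?_
  obtain ⟨X, hX, hgood⟩ := hl' (max X₀ 1)
  exact ⟨X, le_of_max_le_left hX,
    goodSimulVec_anti (EReal.coe_lt_coe_iff.1 hll').le (le_of_max_le_right hX) hgood⟩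

theorem le_lambdaVec_of_frequently {T : ℝ} (hT : 0 < T)
    (h : ∀ t, 0 < t → t < T → ∃ᶠ X in atTop, goodSimulVec N ζ t X) :
    (T : EReal) ≤ lambdaVec N ζ := by
  by_contra! hlt
  obtain ⟨t, hlamt, htT⟩ := EReal.lt_iff_exists_real_btwn.1
    (max_lt hlt (EReal.coe_lt_coe_iff.2 hT))
  have ht : t < T := EReal.coe_lt_coe_iff.1 htT
  have ht0 : 0 < t := EReal.coe_lt_coe_iff.1 ((le_max_right _ _).trans_lt hlamt)
  exact ((le_max_left _ _).trans_lt hlamt).not_ge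
    (le_sSup ⟨t, rfl, frequently_atTop.1 (h t ht0 ht)⟩)

theorem linForm_ne_zero (hli : LinearIndependent ℚ (Fin.cons 1 ζ : Fin (N + 1) → ℝ)) (a : ℤ)
    {b : Fin N → ℤ} (hb : b ≠ 0) : linForm ζ a b ≠ 0 := by
  intro h0
  have hz := Fintype.linearIndependent_iff.1 (hli.restrict_scalars' ℤ)
    (Fin.cons a b) (by simpa [Fin.sum_univ_succ, linForm, zsmul_eq_mul] using h0)
  exact hb (funext fun j => by simpa using hz j.succ)

theorem exists_pos_le_abs_linForm (hli : LinearIndependent ℚ (Fin.cons 1 ζ : Fin (N + 1) → ℝ))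
    (B : ℝ) : ∃ δ > 0, ∀ (a : ℤ) (b : Fin N → ℤ), b ≠ 0 → (∀ j, |(b j : ℝ)| ≤ B) →
      δ ≤ |linForm ζ a b| := by
  classical
  set S := (Fintype.piFinset fun _ : Fin N => Icc (-⌈B⌉₊ : ℤ) ⌈B⌉₊).filter (· ≠ 0)
  set distInt : (Fin N → ℤ) → ℝ := fun b => |∑ j, b j * ζ j - round (∑ j, b j * ζ j)|
  have hle (a : ℤ) (b : Fin N → ℤ) : distInt b ≤ |linForm ζ a b| := by
    simpa [linForm, abs_sub_comm, add_comm] using round_le (∑ j, b j * ζ j) (-a)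
  have hpos (b : Fin N → ℤ) (hb : b ∈ S) : 0 < distInt b :=
    (abs_pos.2 (linForm_ne_zero hli (-round (∑ j, b j * ζ j)) (mem_filter.1 hb).2)).trans_le
      (le_of_eq (by simp [distInt, linForm, sub_eq_neg_add]))
  obtain ⟨δ, hδ, hδS⟩ : ∃ δ > 0, ∀ b ∈ S, δ ≤ distInt b := by
    rcases S.eq_empty_or_nonempty with hS | hS
    · exact ⟨1, one_pos, by simp [hS]⟩
    · obtain ⟨b₀, hb₀, hmin⟩ := S.exists_min_image distInt hS
      exact ⟨_, hpos b₀ hb₀, hmin⟩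
  refine ⟨δ, hδ, fun a b hb hbB => (hδS b ?_).trans (hle a b)⟩
  refine mem_filter.2 ⟨Fintype.mem_piFinset.2 fun j => mem_Icc.2 (abs_le.1 ?_), hb⟩
  exact_mod_cast (hbB j).trans (Nat.le_ceil B)

end

theorem exists_ne_zero_dvd_sum_mul {n : ℕ} {x : ℤ} (hx : x ≠ 0) (y : Fin n → ℤ) {H : ℕ}
    (hH : |x| < ((H : ℤ) + 1) ^ n) :
    ∃ d : Fin n → ℤ, d ≠ 0 ∧ (∀ j, |d j| ≤ H) ∧ x ∣ ∑ j, d j * y j := by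
  classical
  set D := Fintype.piFinset fun _ : Fin n => Icc (0 : ℤ) H
  have hcard : (Ico 0 |x|).card < D.card := by
    have : ((H + 1) ^ n : ℕ) = ((H : ℤ) + 1) ^ n := by push_cast; rfl
    have hH' : |x| < ((H + 1) ^ n : ℕ) := this ▸ hH
    simp only [D, Fintype.card_piFinset, Int.card_Icc, Int.card_Ico, prod_const, card_univ,
      Fintype.card_fin, sub_zero, show ((H : ℤ) + 1).toNat = H + 1 by omega]
    have : 0 < (H + 1) ^ n := by positivity
    omega
  obtain ⟨t, ht, t', ht', hne, heq⟩ := exists_ne_map_eq_of_card_lt_of_maps_to hcard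
    (f := fun t => (∑ j, t j * y j) % |x|) fun t _ => mem_Ico.2
      ⟨Int.emod_nonneg _ (abs_ne_zero.2 hx), Int.emod_lt_of_pos _ (abs_pos.2 hx)⟩
  refine ⟨t - t', sub_ne_zero.2 hne, fun j => ?_, ?_⟩
  · have h := mem_Icc.1 (Fintype.mem_piFinset.1 ht j)
    have h' := mem_Icc.1 (Fintype.mem_piFinset.1 ht' j)
    simp only [Pi.sub_apply, abs_le]
    omega
  · rw [← abs_dvd]
    simpa [sub_mul, sum_sub_distrib] using (Int.ModEq.dvd heq.symm)

theorem exists_linForm_of_approx {n : ℕ} (hn : 0 < n) (ζ : Fin n → ℝ) {x : ℤ} (hx : 1 ≤ |x|)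
    (y : Fin n → ℤ) {ε : ℝ} (hy : ∀ j, |ζ j * x - y j| ≤ ε) :
    ∃ a : ℤ, ∃ b : Fin n → ℤ, b ≠ 0 ∧ (∀ j, |(b j : ℝ)| ≤ |(x : ℝ)| ^ (n⁻¹ : ℝ)) ∧
      |linForm ζ a b| * |(x : ℝ)| ≤ n * |(x : ℝ)| ^ (n⁻¹ : ℝ) * ε := by
  set R := |(x : ℝ)| ^ (n⁻¹ : ℝ)
  have hR : 0 ≤ R := by positivity
  have hH : |x| < ((⌊R⌋₊ : ℤ) + 1) ^ n := by
    have hRn : R ^ n = |(x : ℝ)| := by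
      rw [← Real.rpow_natCast, ← Real.rpow_mul (abs_nonneg _),
        inv_mul_cancel₀ (by positivity), Real.rpow_one]
    have : |(x : ℝ)| < ((⌊R⌋₊ : ℝ) + 1) ^ n :=
      hRn ▸ pow_lt_pow_left₀ (Nat.lt_floor_add_one R) hR hn.ne'
    exact_mod_cast this
  obtain ⟨d, hd, hdH, c, hc⟩ := exists_ne_zero_dvd_sum_mul (by rintro rfl; simp at hx) y hH
  have hdR (j : Fin n) : |(d j : ℝ)| ≤ R :=
    (by exact_mod_cast hdH j : |(d j : ℝ)| ≤ ⌊R⌋₊).trans (Nat.floor_le hR)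
  have key : linForm ζ (-c) d * x = ∑ j, d j * (ζ j * x - y j) := by
    have hcR : (x : ℝ) * c = ∑ j, (d j : ℝ) * y j := by exact_mod_cast hc.symm
    simp only [linForm, mul_sub, sum_sub_distrib, ← hcR, add_mul, sum_mul]
    push_cast
    simp only [mul_assoc]
    ring
  refine ⟨-c, d, hd, hdR, ?_⟩
  calc |linForm ζ (-c) d| * |(x : ℝ)| = |∑ j, d j * (ζ j * x - y j)| := by
        rw [← abs_mul, key]
    _ ≤ ∑ j, |(d j : ℝ)| * |ζ j * x - y j| := by
        simpa only [abs_mul] using abs_sum_le_sum_abs (fun j => (d j : ℝ) * (ζ j * x - y j)) univ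
    _ ≤ ∑ _j : Fin n, R * ε := sum_le_sum fun j _ => mul_le_mul (hdR j) (hy j) (abs_nonneg _) hR
    _ = n * R * ε := by simp [mul_assoc]

/-- A quantitative form of `ω_N(ζ) ≥ w`, `ω_N` being the exponent of approximation by linear
forms. -/
def HasSmallLinearForms (N : ℕ) (ζ : Fin N → ℝ) (C w : ℝ) : Prop :=
  ∀ η > 0, ∃ a : ℤ, ∃ b : Fin N → ℤ, ∃ U : ℝ, b ≠ 0 ∧ 1 ≤ U ∧ (∀ j, |(b j : ℝ)| ≤ U) ∧
    |linForm ζ a b| ≤ η ∧ |linForm ζ a b| ≤ C * U ^ (-w)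

theorem HasSmallLinearForms.of_lt_lambdaVec {n : ℕ} (hn : 0 < n) {ζ : Fin n → ℝ} {l : ℝ}
    (hl0 : 0 < l) (hl : (l : EReal) < lambdaVec n ζ) :
    HasSmallLinearForms n ζ n (n * l + n - 1) := by
  intro η hη
  obtain ⟨Y, hY, x, y, hx, hxY, hy⟩ :=
    frequently_atTop.1 (frequently_goodSimulVec_of_lt_lambdaVec hl) ((n / η) ^ l⁻¹)
  obtain ⟨a, b, hb, hbU, hL⟩ := exists_linForm_of_approx hn ζ hx y hy
  set X := |(x : ℝ)|
  have hX1 : 1 ≤ X := by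
    show (1 : ℝ) ≤ |(x : ℝ)|
    rw [← Int.cast_abs]
    exact_mod_cast hx
  have hX0 : 0 < X := one_pos.trans_le hX1
  have hY0 : 0 < Y := (by positivity : 0 < (n / η) ^ l⁻¹).trans_le hY
  have hYX : Y ^ (-l) ≤ X ^ (-l) := Real.rpow_le_rpow_of_nonpos hX0 hxY (neg_nonpos.2 hl0.le)
  have hL' : |linForm ζ a b| ≤ n * X ^ ((n : ℝ)⁻¹ - 1) * Y ^ (-l) := by
    rw [Real.rpow_sub_one hX0.ne']
    calc |linForm ζ a b| ≤ n * X ^ (n⁻¹ : ℝ) * Y ^ (-l) / X := (le_div_iff₀ hX0).2 hL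
      _ = _ := by ring
  refine ⟨a, b, X ^ (n⁻¹ : ℝ), hb, Real.one_le_rpow hX1 (by positivity), hbU, ?_, ?_⟩
  · have hXn : X ^ ((n : ℝ)⁻¹ - 1) ≤ 1 :=
      Real.rpow_le_one_of_one_le_of_nonpos hX1
        (sub_nonpos.2 (inv_le_one_of_one_le₀ (by exact_mod_cast hn)))
    have hYη : n * Y ^ (-l) ≤ η := by
      rw [Real.rpow_neg hY0.le, ← div_eq_mul_inv, div_le_iff₀ (by positivity), mul_comm,
        ← div_le_iff₀ hη]
      calc (n / η) = ((n / η) ^ l⁻¹) ^ l := by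
            rw [← Real.rpow_mul (by positivity), inv_mul_cancel₀ hl0.ne', Real.rpow_one]
        _ ≤ Y ^ l := Real.rpow_le_rpow (by positivity) hY hl0.le
    calc |linForm ζ a b| ≤ n * X ^ ((n : ℝ)⁻¹ - 1) * Y ^ (-l) := hL'
      _ ≤ n * 1 * Y ^ (-l) := by gcongr
      _ ≤ η := by simpa using hYη
  · calc |linForm ζ a b| ≤ n * X ^ ((n : ℝ)⁻¹ - 1) * X ^ (-l) := by
          refine hL'.trans ?_
          gcongr
      _ = n * (X ^ (n⁻¹ : ℝ)) ^ (-(n * l + n - 1)) := by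
          rw [mul_assoc, ← Real.rpow_add hX0, ← Real.rpow_mul hX0.le]
          congr 2
          field_simp
          ring

theorem HasSmallLinearForms.castLE {n k : ℕ} (hnk : n ≤ k) {ζ : Fin k → ℝ} {C w : ℝ}
    (h : HasSmallLinearForms n (ζ ∘ Fin.castLE hnk) C w) : HasSmallLinearForms k ζ C w := by
  intro η hη
  obtain ⟨a, b, U, hb, hU, hbU, hLη, hLU⟩ := h η hη
  have hinj := Fin.castLE_injective hnk
  set b' := Function.extend (Fin.castLE hnk) b 0
  have hL : linForm ζ a b' = linForm (ζ ∘ Fin.castLE hnk) a b := by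
    simp only [linForm]
    congr 1
    refine (Fintype.sum_of_injective _ hinj _ _ (fun j hj => ?_) fun i => ?_).symm
    · simp [b', Function.extend_apply' _ _ _ (mt Set.mem_range.2 hj)]
    · simp [b', hinj.extend_apply]
  refine ⟨a, b', U, fun h0 => hb (funext fun i => ?_), hU, fun j => ?_, hL ▸ hLη, hL ▸ hLU⟩
  · simpa [b', hinj.extend_apply] using congr_fun h0 (Fin.castLE hnk i)
  · by_cases hj : ∃ i, Fin.castLE hnk i = j
    · obtain ⟨i, rfl⟩ := hj
      simpa [b', hinj.extend_apply] using hbU i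
    · simpa [b', Function.extend_apply' _ _ _ hj] using zero_le_one.trans hU

theorem abs_sub_lt_inv_of_floor_mul_eq {Q a b : ℝ} (hQ : 0 < Q) (h : ⌊Q * a⌋ = ⌊Q * b⌋) :
    |a - b| < 1 / Q := by
  have := Int.abs_sub_lt_one_of_floor_eq_floor h
  rw [← mul_sub, abs_mul, abs_of_pos hQ] at this
  rwa [lt_div_iff₀ hQ, mul_comm]

theorem exists_approx_with_congr {r : ℕ} (θ : Fin r → ℝ) (c : ℤ) (e : Fin r → ℤ) {U Q : ℕ}
    (hU : 0 < U) (hQ : 0 < Q) :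
    ∃ x : ℤ, ∃ y : Fin r → ℤ, 1 ≤ x ∧ x ≤ Q ^ r * U ∧ (∀ i, |θ i * x - y i| < 1 / Q) ∧
      (U : ℤ) ∣ c * x + ∑ i, e i * y i := by
  classical
  set ρ : ℕ → ℤ := fun z => c * z + ∑ i, e i * ⌊θ i * z⌋
  set T := Ico (0 : ℤ) U ×ˢ Fintype.piFinset fun _ : Fin r => Ico (0 : ℤ) Q
  have hmaps : ∀ z ∈ range (Q ^ r * U + 1),
      (ρ z % U, fun i => ⌊(Q : ℝ) * Int.fract (θ i * z)⌋) ∈ T := by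
    intro z _
    refine mem_product.2 ⟨mem_Ico.2 ⟨Int.emod_nonneg _ (by omega), Int.emod_lt_of_pos _
      (by omega)⟩, Fintype.mem_piFinset.2 fun i => mem_Ico.2 ⟨?_, Int.floor_lt.2 ?_⟩⟩
    · exact Int.floor_nonneg.2 (mul_nonneg (Nat.cast_nonneg _) (Int.fract_nonneg _))
    · simpa using mul_lt_of_lt_one_right (by exact_mod_cast hQ) (Int.fract_lt_one (θ i * z))
  have hcard : T.card < (range (Q ^ r * U + 1)).card := by
    simp [T, Int.card_Ico, mul_comm]
  obtain ⟨z, hz, z', hz', hne, heq⟩ := exists_ne_map_eq_of_card_lt_of_maps_to hcard hmaps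
  wlog hlt : z' < z generalizing z z'
  · exact this z' hz' z hz hne.symm heq.symm (lt_of_le_of_ne (not_lt.1 hlt) hne)
  simp only [Prod.mk.injEq, funext_iff] at heq
  refine ⟨z - z', fun i => ⌊θ i * z⌋ - ⌊θ i * z'⌋, by omega, ?_, fun i => ?_, ?_⟩
  · have : (z : ℤ) ≤ (Q : ℤ) ^ r * U := by exact_mod_cast Nat.lt_succ_iff.1 (mem_range.1 hz)
    omega
  · convert abs_sub_lt_inv_of_floor_mul_eq (by exact_mod_cast hQ) (heq.2 i) using 2
    push_cast
    rw [Int.fract, Int.fract]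
    ring
  · convert (Int.ModEq.dvd heq.1.symm) using 1
    simp only [ρ, mul_sub, sum_sub_distrib]
    ring

theorem abs_le_of_mul_eq_sub_sum {k : ℕ} {β e x L Q : ℝ} {β' e' : Fin k → ℝ} (hβ : 0 < |β|)
    (hx : 0 ≤ x) (hxQ : x ≤ Q ^ k * |β|) (hβ' : ∀ i, |β' i| ≤ |β|) (he' : ∀ i, |e' i| ≤ 1 / Q)
    (h : β * e = x * L - ∑ i, β' i * e' i) : |e| ≤ Q ^ k * |L| + k / Q := by
  refine le_of_mul_le_mul_left ?_ hβ
  calc |β| * |e| = |x * L - ∑ i, β' i * e' i| := by rw [← abs_mul, h]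
    _ ≤ x * |L| + ∑ i, |β' i| * |e' i| := by
        refine (abs_sub _ _).trans (add_le_add (by rw [abs_mul, abs_of_nonneg hx]) ?_)
        simpa only [abs_mul] using abs_sum_le_sum_abs (fun i => β' i * e' i) univ
    _ ≤ Q ^ k * |β| * |L| + ∑ _i : Fin k, |β| * (1 / Q) := by
        gcongr ?_ * _ + ∑ i, ?_ * ?_ with i
        exacts [hβ' i, he' i]
    _ = |β| * (Q ^ k * |L| + k / Q) := by
        rw [sum_const, card_univ, Fintype.card_fin, nsmul_eq_mul]
        ring

/-- The coordinate `m` where `|b m|` is maximal is recovered from `L` and the other coordinates;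
the congruence in `exists_approx_with_congr` is what makes `y m` an integer. -/
theorem exists_simultaneous_approx_of_linForm {k : ℕ} (ζ : Fin (k + 1) → ℝ) (a : ℤ)
    {b : Fin (k + 1) → ℤ} (hb : b ≠ 0) {U : ℝ} (hbU : ∀ j, |(b j : ℝ)| ≤ U) {Q : ℕ}
    (hQ : 0 < Q) :
    ∃ x : ℤ, ∃ y : Fin (k + 1) → ℤ, 1 ≤ x ∧ (x : ℝ) ≤ Q ^ k * U ∧
      ∀ j, |ζ j * x - y j| ≤ Q ^ k * |linForm ζ a b| + (k + 1) / Q := by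
  obtain ⟨m, -, hm⟩ := exists_max_image univ (fun j => |(b j : ℝ)|) univ_nonempty
  have hbm : 0 < |(b m : ℝ)| := by
    obtain ⟨j, hj⟩ := Function.ne_iff.1 hb
    exact (abs_pos.2 (by exact_mod_cast hj)).trans_le (hm j (mem_univ j))
  obtain ⟨x, y', hx1, hxQ, hy', hdvd⟩ := exists_approx_with_congr (ζ ∘ m.succAbove) a
    (b ∘ m.succAbove) (U := (b m).natAbs) (Int.natAbs_pos.2 (by exact_mod_cast abs_pos.1 hbm)) hQ
  obtain ⟨c, hc⟩ := Int.natAbs_dvd.1 hdvd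
  have hxQ' : (x : ℝ) ≤ Q ^ k * |(b m : ℝ)| := by
    rw [Int.natCast_natAbs] at hxQ
    exact_mod_cast hxQ
  have key : (b m : ℝ) * (ζ m * x + c) =
      x * linForm ζ a b - ∑ i, b (m.succAbove i) * (ζ (m.succAbove i) * x - y' i) := by
    have hcR : a * x + ∑ i, (b (m.succAbove i) : ℝ) * y' i = b m * c := by exact_mod_cast hc
    have hsum : ∑ i, (b (m.succAbove i) : ℝ) * (ζ (m.succAbove i) * x - y' i) =
        x * ∑ i, b (m.succAbove i) * ζ (m.succAbove i) - ∑ i, (b (m.succAbove i) : ℝ) * y' i := by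
      rw [mul_sum, ← sum_sub_distrib]
      exact sum_congr rfl fun i _ => by ring
    rw [hsum, linForm, Fin.sum_univ_succAbove _ m]
    linear_combination -hcR
  have hkQ : (k : ℝ) / Q ≤ (k + 1) / Q := by gcongr; linarith
  refine ⟨x, Fin.insertNth m (-c) y', hx1, hxQ'.trans (by gcongr; exact hbU m), fun j => ?_⟩
  induction j using Fin.succAboveCases m with
  | x =>
    rw [Fin.insertNth_apply_same, Int.cast_neg, sub_neg_eq_add]
    refine (abs_le_of_mul_eq_sub_sum hbm (by exact_mod_cast (zero_le_one.trans hx1)) hxQ'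
      (fun i => hm _ (mem_univ _)) (fun i => (hy' i).le) key).trans (by linarith)
  | p i =>
    rw [Fin.insertNth_apply_succAbove]
    refine (hy' i).le.trans (le_add_of_nonneg_of_le (by positivity) ?_)
    gcongr
    linarith [(k.cast_nonneg : (0 : ℝ) ≤ k)]

theorem eventually_mul_rpow_le_self (K : ℝ) {s : ℝ} (hs : s < 1) :
    ∀ᶠ q : ℝ in atTop, K * q ^ s ≤ q := by
  filter_upwards [(tendsto_rpow_atTop (sub_pos.2 hs)).eventually_ge_atTop K,
    eventually_gt_atTop 0] with q hK hq
  calc K * q ^ s ≤ q ^ (1 - s) * q ^ s := by gcongr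
    _ = q := by rw [← Real.rpow_add hq, sub_add_cancel, Real.rpow_one]

theorem le_rpow_inv_of_le_mul_rpow_neg {C d U w : ℝ} (hd : 0 < d) (hU : 0 < U) (hw : 0 < w)
    (h : d ≤ C * U ^ (-w)) : U ≤ (C / d) ^ w⁻¹ := by
  have hUw : U ^ w ≤ C / d := by
    rw [le_div_iff₀ hd, ← le_div_iff₀' (by positivity), div_eq_mul_inv, ← Real.rpow_neg hU.le]
    exact h
  calc U = (U ^ w) ^ w⁻¹ := (Real.rpow_rpow_inv hU.le hw.ne').symm
    _ ≤ (C / d) ^ w⁻¹ := by gcongr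

theorem add_div_le_rpow_neg {k : ℕ} {C w τ q Q U d : ℝ} (hC : 0 < C) (hw : 0 < w)
    (hτ : 0 ≤ τ) (hq : 0 < q) (hqd : q ^ (k + 1) * d = 1) (hqQ : q ≤ Q) (hQq : Q ≤ 2 * q)
    (hU : 0 < U) (hdU : d ≤ C * U ^ (-w))
    (hK : (2 ^ k + k + 1) * (2 ^ k * C ^ w⁻¹) ^ τ * q ^ ((k + (k + 1) / w) * τ) ≤ q) :
    Q ^ k * d + (k + 1) / Q ≤ (Q ^ k * U) ^ (-τ) := by
  have hd : d = (q ^ (k + 1))⁻¹ := eq_inv_of_mul_eq_one_right hqd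
  have hQ : 0 < Q := hq.trans_le hqQ
  have herr : Q ^ k * d + (k + 1) / Q ≤ (2 ^ k + k + 1) / q :=
    calc Q ^ k * d + (k + 1) / Q ≤ (2 * q) ^ k * d + (k + 1) / q := by
          gcongr
          exact hd ▸ (inv_pos.2 (by positivity)).le
      _ = (2 ^ k + k + 1) / q := by
          rw [hd]
          field_simp
          ring
  have hUq : U ≤ (C * q ^ (k + 1)) ^ w⁻¹ := by
    simpa [hd, div_eq_mul_inv] using le_rpow_inv_of_le_mul_rpow_neg (hd ▸ by positivity) hU hw hdU
  have hqpow : q ^ k * (q ^ (k + 1)) ^ w⁻¹ = q ^ (k + (k + 1) / w) := by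
    rw [← Real.rpow_natCast q k, ← Real.rpow_natCast q (k + 1), ← Real.rpow_mul hq.le,
      ← Real.rpow_add hq]
    congr 1
    push_cast
    ring
  have hX : (Q ^ k * U) ^ τ ≤ (2 ^ k * C ^ w⁻¹) ^ τ * q ^ ((k + (k + 1) / w) * τ) :=
    calc (Q ^ k * U) ^ τ ≤ ((2 * q) ^ k * (C * q ^ (k + 1)) ^ w⁻¹) ^ τ := by gcongr
      _ = ((2 ^ k * C ^ w⁻¹) * (q ^ k * (q ^ (k + 1)) ^ w⁻¹)) ^ τ := by
          rw [mul_pow, Real.mul_rpow hC.le (by positivity), mul_mul_mul_comm]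
      _ = (2 ^ k * C ^ w⁻¹) ^ τ * q ^ ((k + (k + 1) / w) * τ) := by
          rw [hqpow, Real.mul_rpow (by positivity) (by positivity), Real.rpow_mul hq.le]
  refine herr.trans ?_
  rw [Real.rpow_neg (by positivity), div_le_iff₀ hq, inv_mul_eq_div,
    le_div_iff₀ (by positivity)]
  calc (2 ^ k + k + 1) * (Q ^ k * U) ^ τ
      ≤ (2 ^ k + k + 1) * ((2 ^ k * C ^ w⁻¹) ^ τ * q ^ ((k + (k + 1) / w) * τ)) := by gcongr
    _ ≤ q := by rwa [← mul_assoc]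

theorem HasSmallLinearForms.frequently_goodSimulVec {k : ℕ} {ζ : Fin (k + 1) → ℝ}
    (hli : LinearIndependent ℚ (Fin.cons 1 ζ : Fin (k + 2) → ℝ)) {C w τ : ℝ} (hC : 0 < C)
    (hw : 0 < w) (hτ : 0 ≤ τ) (hτw : τ * (k * w + k + 1) < w)
    (h : HasSmallLinearForms (k + 1) ζ C w) : ∃ᶠ X in atTop, goodSimulVec (k + 1) ζ τ X := by
  refine frequently_atTop.2 fun X₀ => ?_
  have hs : (k + (k + 1) / w) * τ < 1 := by
    rw [add_div' _ _ _ hw.ne', div_mul_eq_mul_div, div_lt_one hw]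
    linarith
  obtain ⟨q₀, hq₀⟩ := eventually_atTop.1
    (eventually_mul_rpow_le_self ((2 ^ k + k + 1) * (2 ^ k * C ^ w⁻¹) ^ τ) hs)
  set q₁ := max q₀ 1
  obtain ⟨δ, hδ, hδL⟩ := exists_pos_le_abs_linForm hli X₀
  obtain ⟨a, b, U, hb, hU, hbU, hLη, hLU⟩ := h (min (δ / 2) (q₁ ^ (k + 1))⁻¹) (by positivity)
  set d := |linForm ζ a b|
  have hd : 0 < d := abs_pos.2 (linForm_ne_zero hli a hb)
  have hUX : X₀ ≤ U := by
    by_contra! hUX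
    linarith [hδL a b hb fun j => (hbU j).trans hUX.le, min_le_left (δ / 2) (q₁ ^ (k + 1))⁻¹]
  -- `Q = ⌈q⌉₊` balances the two terms `Q ^ k * d` and `(k + 1) / Q` of the error.
  set q := d⁻¹ ^ ((k + 1 : ℕ) : ℝ)⁻¹
  have hq0 : 0 < q := by positivity
  have hqd : q ^ (k + 1) * d = 1 := by
    rw [← Real.rpow_natCast, Real.rpow_inv_rpow (by positivity) (by positivity),
      inv_mul_cancel₀ hd.ne']
  have hq : q₁ ≤ q := by
    refine (pow_le_pow_iff_left₀ (by positivity) hq0.le k.succ_ne_zero).1 ?_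
    rw [eq_inv_of_mul_eq_one_left hqd]
    exact le_inv_of_le_inv₀ (by positivity) (hLη.trans (min_le_right _ _))
  have hq1 : 1 ≤ q := (le_max_right _ _).trans hq
  have hQ : 0 < ⌈q⌉₊ := Nat.ceil_pos.2 hq0
  have hQq : (⌈q⌉₊ : ℝ) ≤ 2 * q := by linarith [Nat.ceil_lt_add_one hq0.le]
  obtain ⟨x, y, hx1, hxX, hxy⟩ := exists_simultaneous_approx_of_linForm ζ a hb hbU hQ
  refine ⟨⌈q⌉₊ ^ k * U, hUX.trans (le_mul_of_one_le_left (by linarith)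
    (one_le_pow₀ (Nat.one_le_cast.2 hQ))), x, y, hx1.trans (le_abs_self x), ?_, fun j =>
      (hxy j).trans (add_div_le_rpow_neg hC hw hτ hq0 hqd (Nat.le_ceil q) hQq (by linarith) hLU
        (hq₀ q ((le_max_left _ _).trans hq)))⟩
  rwa [abs_of_pos (Int.cast_pos.2 (by omega))]

/-- Here `ξ j` denotes `ξ_{j+1}`. -/
theorem stmt_15 (n k : ℕ) (hn : 1 ≤ n) (hnk : n ≤ k) (ξ : ℕ → ℝ)
    (hli : LinearIndependent ℚ
      (Fin.cons 1 (fun j : Fin k => ξ (j : ℕ)) : Fin (k + 1) → ℝ))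
    (l : ℝ) (hl : lambdaVec n (fun j : Fin n => ξ (j : ℕ)) = (l : EReal))
    (hbig : ((k : ℝ) - n + 1) / n < l) :
    ((((n : ℝ) * l + n - 1) / ((n : ℝ) * (k - 1) * (l + 1) + 1) : ℝ) : EReal) ≤
        lambdaVec k (fun j : Fin k => ξ (j : ℕ)) ∧
      (1 : ℝ) / k < ((n : ℝ) * l + n - 1) / ((n : ℝ) * (k - 1) * (l + 1) + 1) := by
  have hn0 : (0 : ℝ) < n := by exact_mod_cast hn
  have hnk' : (n : ℝ) ≤ k := by exact_mod_cast hnk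
  rw [div_lt_iff₀ hn0] at hbig
  have hl0 : 0 < l := by nlinarith
  have hden : 0 < (n : ℝ) * (k - 1) * (l + 1) + 1 := by
    have : 0 ≤ (n : ℝ) * (k - 1) * (l + 1) := by
      apply mul_nonneg (mul_nonneg hn0.le _) <;> linarith [(Nat.one_le_cast (α := ℝ)).2 hn]
    linarith
  refine ⟨le_lambdaVec_of_frequently (div_pos (by nlinarith) hden) fun τ hτ0 hτ => ?_, ?_⟩
  · rw [lt_div_iff₀ hden] at hτ
    obtain ⟨l', ⟨hl'0, hl'l⟩, hτl'⟩ : ∃ l' ∈ Set.Ioo 0 l,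
        τ * (((k : ℝ) - 1) * (n * l' + n - 1) + k) < n * l' + n - 1 :=
      (Eventually.and (Ioo_mem_nhdsLT hl0) (eventually_nhdsWithin_of_eventually_nhds
        (ContinuousAt.eventually_lt (by fun_prop) (by fun_prop) (by linarith)))).exists
    have hsmall : HasSmallLinearForms k (fun j : Fin k => ξ j) n (n * l' + n - 1) :=
      (HasSmallLinearForms.of_lt_lambdaVec hn hl'0 (hl ▸ EReal.coe_lt_coe_iff.2 hl'l)).castLE hnk
    obtain ⟨k, rfl⟩ : ∃ k', k = k' + 1 := ⟨k - 1, by omega⟩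
    refine hsmall.frequently_goodSimulVec hli hn0 (by nlinarith) hτ0.le ?_
    push_cast at hτl'
    linarith
  · rw [div_lt_div_iff₀ (by linarith) hden]
    nlinarith
end
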